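/- Suppose B_1, B_2 ∈ M_N(ℂ) satisfy w(B_1 + μB_2) ≤ 1 for all complex μ with |μ| ≤ 1. If u is a unit vector with |u*B_1 u| = 1, then u*B_2 u = 0. -/

import Mathlib

open Matrix Kronecker

noncomputable def numRange {n : Type*} [Fintype n] (A : Matrix n n ℂ) : Set ℂ :=
  {z | ∃ u : n → ℂ, dotProduct (star u) u = 1 ∧ z = dotProduct (star u) (A.mulVec u)}

noncomputable def numRadius {n : Type*} [Fintype n] (A : Matrix n n ℂ) : ℝ :=
  sSup {r | ∃ z ∈ numRange A, r = ‖z‖}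

/-!
Evaluating at `u` gives `‖a + μ b‖ ≤ w(B₁ + μ B₂) ≤ 1` for `a = u*B₁u`, `b = u*B₂u` and all `|μ| ≤ 1`.
Since `|a| = 1`, choosing `μ` with `μ b = |b| a` yields `1 + |b| ≤ 1`, so `b = 0`.
-/

open WithLp

theorem RCLike.eq_zero_of_forall_norm_add_mul_le_one {𝕜 : Type*} [RCLike 𝕜] {a b : 𝕜}
    (ha : ‖a‖ = 1) (h : ∀ μ : 𝕜, ‖μ‖ ≤ 1 → ‖a + μ * b‖ ≤ 1) : b = 0 := by
  by_contra hb
  have hb' : 0 < ‖b‖ := norm_pos_iff.mpr hb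
  set μ : 𝕜 := ‖b‖ * a / b
  have hμ : ‖μ‖ = 1 := by
    simp [μ, ha, hb'.ne']
  have hsum : a + μ * b = (1 + ‖b‖ : ℝ) * a := by
    simp only [μ, div_mul_cancel₀ _ hb]
    push_cast
    ring
  have := h μ hμ.le
  rw [hsum, norm_mul, ha, mul_one, RCLike.norm_ofReal, abs_of_pos (by positivity)] at this
  linarith

section

variable {n : Type*} [Fintype n]

theorem EuclideanSpace.norm_toLp_eq_one_of_star_dotProduct_self {𝕜 : Type*} [RCLike 𝕜]
    {u : n → 𝕜} (hu : star u ⬝ᵥ u = 1) : ‖(toLp 2 u : EuclideanSpace 𝕜 n)‖ = 1 := by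
  have h : ‖(toLp 2 u : EuclideanSpace 𝕜 n)‖ ^ 2 = 1 := by
    rw [← inner_self_eq_norm_sq (𝕜 := 𝕜), EuclideanSpace.inner_toLp_toLp, dotProduct_comm, hu,
      RCLike.one_re]
  exact (pow_eq_one_iff_of_nonneg (norm_nonneg _) two_ne_zero).mp h

theorem norm_star_dotProduct_mulVec_le {𝕜 : Type*} [RCLike 𝕜] [DecidableEq n]
    (A : Matrix n n 𝕜) {u : n → 𝕜} (hu : star u ⬝ᵥ u = 1) :
    ‖star u ⬝ᵥ A *ᵥ u‖ ≤ ‖toEuclideanCLM (𝕜 := 𝕜) A‖ := by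
  have hu' := EuclideanSpace.norm_toLp_eq_one_of_star_dotProduct_self hu
  calc ‖star u ⬝ᵥ A *ᵥ u‖
      = ‖inner 𝕜 (toLp 2 u : EuclideanSpace 𝕜 n) (toEuclideanCLM (𝕜 := 𝕜) A (toLp 2 u))‖ := by
        rw [toEuclideanCLM_toLp, EuclideanSpace.inner_toLp_toLp, dotProduct_comm]
    _ ≤ ‖(toLp 2 u : EuclideanSpace 𝕜 n)‖ * ‖toEuclideanCLM (𝕜 := 𝕜) A (toLp 2 u)‖ :=
        norm_inner_le_norm _ _
    _ ≤ ‖toEuclideanCLM (𝕜 := 𝕜) A‖ := by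
        simpa [hu'] using (toEuclideanCLM (𝕜 := 𝕜) A).le_opNorm (toLp 2 u)

theorem bddAbove_norm_numRange (A : Matrix n n ℂ) :
    BddAbove {r | ∃ z ∈ numRange A, r = ‖z‖} := by
  classical
  refine ⟨‖toEuclideanCLM (𝕜 := ℂ) A‖, ?_⟩
  rintro _ ⟨_, ⟨u, hu, rfl⟩, rfl⟩
  exact norm_star_dotProduct_mulVec_le A hu

theorem norm_star_dotProduct_mulVec_le_numRadius (A : Matrix n n ℂ) {u : n → ℂ}
    (hu : star u ⬝ᵥ u = 1) : ‖star u ⬝ᵥ A *ᵥ u‖ ≤ numRadius A :=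
  le_csSup (bddAbove_norm_numRange A) ⟨_, ⟨u, hu, rfl⟩, rfl⟩

end

theorem claim1_diagonal (N : ℕ) (B₁ B₂ : Matrix (Fin N) (Fin N) ℂ)
    (h : ∀ μ : ℂ, ‖μ‖ ≤ 1 → numRadius (B₁ + μ • B₂) ≤ 1)
    (u : Fin N → ℂ) (hu : dotProduct (star u) u = 1)
    (hB₁ : ‖dotProduct (star u) (B₁.mulVec u)‖ = 1) :
    dotProduct (star u) (B₂.mulVec u) = 0 := by
  refine RCLike.eq_zero_of_forall_norm_add_mul_le_one hB₁ fun μ hμ => ?_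
  calc ‖star u ⬝ᵥ B₁ *ᵥ u + μ * star u ⬝ᵥ B₂ *ᵥ u‖
      = ‖star u ⬝ᵥ (B₁ + μ • B₂) *ᵥ u‖ := by
        rw [add_mulVec, smul_mulVec, dotProduct_add, dotProduct_smul, smul_eq_mul]
    _ ≤ numRadius (B₁ + μ • B₂) := norm_star_dotProduct_mulVec_le_numRadius _ hu
    _ ≤ 1 := h μ hμ
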